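/- Area anomaly of the rotating-drift walk: fix p ∈ (0, 1) and let ζ_1, ζ_2, ζ_3, ζ_4 be independent random variables with P(ζ_k = 1) = p and P(ζ_k = −1) = 1 − p. Define the ℝ²-valued walk X_0 = 0, X_n = X_{n−1} + Δx_n for 1 ≤ n ≤ 4, with increments Δx_1 = (0, ζ_1), Δx_2 = (−ζ_2, 0), Δx_3 = (0, −ζ_3), Δx_4 = (ζ_4, 0) (i.e., Δx_n is i^n ζ_n under the identification ℝ² ≅ ℂ). Then (1/4) E[A_{0,4}(X)] = ((2p − 1)² / 4) · [[0, 1], [−1, 0]]; in particular this matrix is nonzero whenever p ≠ 1/2. -/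

import Mathlib

open Matrix Finset MeasureTheory ProbabilityTheory

/-- `tens a b` is the `2 × 2` matrix `(a i * b j)_{i,j}`, i.e. the tensor product `a ⊗ b`. -/
noncomputable def tens {d : ℕ} (a b : Fin d → ℝ) : Matrix (Fin d) (Fin d) ℝ :=
  Matrix.of fun i j => a i * b j

/-- The increment `Δx_k = x_k − x_{k−1}` of a sequence `x : ℕ → ℝ^d`. -/
noncomputable def inc {d : ℕ} (x : ℕ → Fin d → ℝ) (k : ℕ) : Fin d → ℝ :=
  x k - x (k - 1)

/-- The discrete signed area
`A_{m,n}(x) = (1/2) Σ_{m+1 ≤ k < ℓ ≤ n} (Δx_k ⊗ Δx_ℓ − Δx_ℓ ⊗ Δx_k)`. -/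
noncomputable def sarea {d : ℕ} (x : ℕ → Fin d → ℝ) (m n : ℕ) : Matrix (Fin d) (Fin d) ℝ :=
  (1 / 2 : ℝ) • ∑ k ∈ Finset.Icc (m + 1) n, ∑ l ∈ Finset.Icc (k + 1) n,
    (tens (inc x k) (inc x l) - tens (inc x l) (inc x k))

/-
Under the identification ℝ² ≅ ℂ the increments are `i^k ζ_k`, and the signed area of the four-step
walk is `(1/2)(ζ₁ζ₂ − ζ₁ζ₄ + ζ₂ζ₃ + ζ₃ζ₄) · [[0,1],[−1,0]]`. Each sign has mean `2p − 1`, so by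
independence each of the four products has mean `(2p − 1)²`; as three of them enter with sign
`+` and one with `−`, the expected area is `(2p − 1)² · [[0,1],[−1,0]]`.
-/

lemma sarea_rotating_walk (a b c e : ℝ) (x : ℕ → Fin 2 → ℝ) (h0 : x 0 = 0)
    (h1 : x 1 = x 0 + ![0, a]) (h2 : x 2 = x 1 + ![-b, 0])
    (h3 : x 3 = x 2 + ![0, -c]) (h4 : x 4 = x 3 + ![e, 0]) :
    sarea x 0 4 = ((a * b - a * e + b * c + c * e) / 2) • !![0, 1; -1, 0] := by
  ext i j
  fin_cases i <;> fin_cases j <;>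
    simp [sarea, inc, tens, Finset.sum_Icc_succ_top, h0, h1, h2, h3, h4] <;> ring

section Sign

variable {Ω : Type*} [MeasurableSpace Ω] {P : Measure Ω} [IsProbabilityMeasure P]
  {ξ : Ω → ℝ} {p : ℝ}

lemma ae_eq_one_or_eq_neg_one (hξ : Measurable ξ) (hp0 : 0 ≤ p) (hp1 : p ≤ 1)
    (hone : P {ω | ξ ω = 1} = ENNReal.ofReal p)
    (hmone : P {ω | ξ ω = -1} = ENNReal.ofReal (1 - p)) :
    ∀ᵐ ω ∂P, ξ ω = 1 ∨ ξ ω = -1 := by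
  have hA : MeasurableSet {ω | ξ ω = 1} := hξ (measurableSet_singleton 1)
  have hB : MeasurableSet {ω | ξ ω = -1} := hξ (measurableSet_singleton (-1))
  have hdisj : Disjoint {ω | ξ ω = 1} {ω | ξ ω = -1} :=
    Set.disjoint_left.2 fun ω (h1 : ξ ω = 1) (h2 : ξ ω = -1) => by linarith
  rw [ae_iff_measure_eq (p := fun ω => ξ ω = 1 ∨ ξ ω = -1) (hA.union hB).nullMeasurableSet,
    Set.ofPred_or, measure_union hdisj hB, hone, hmone, ← ENNReal.ofReal_add hp0 (by linarith),
    measure_univ]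
  norm_num

lemma integrable_of_ae_eq_one_or_eq_neg_one (hξ : Measurable ξ)
    (h : ∀ᵐ ω ∂P, ξ ω = 1 ∨ ξ ω = -1) : Integrable ξ P :=
  .of_bound hξ.aestronglyMeasurable 1 <| h.mono fun ω hω => by rcases hω with hω | hω <;> simp [hω]

lemma integral_eq_two_mul_sub_one (hξ : Measurable ξ) (hp0 : 0 ≤ p)
    (h : ∀ᵐ ω ∂P, ξ ω = 1 ∨ ξ ω = -1)
    (hone : P {ω | ξ ω = 1} = ENNReal.ofReal p) :
    ∫ ω, ξ ω ∂P = 2 * p - 1 := by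
  have hA : MeasurableSet {ω | ξ ω = 1} := hξ (measurableSet_singleton 1)
  have hξ_eq : ξ =ᵐ[P] fun ω => 2 * {ω | ξ ω = 1}.indicator 1 ω - 1 := by
    filter_upwards [h] with ω hω
    rcases hω with hω | hω <;> norm_num [Set.indicator_apply, hω]
  rw [integral_congr_ae hξ_eq, integral_sub (((integrable_const 1).indicator hA).const_mul 2)
    (integrable_const 1), integral_const_mul, Pi.one_def, integral_indicator_const _ hA,
    Measure.real, hone, ENNReal.toReal_ofReal hp0]
  simp

end Sign

lemma integral_rotating_area_coefficient {Ω : Type*} [MeasurableSpace Ω] {P : Measure Ω}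
    {ζ : Fin 4 → Ω → ℝ} {m : ℝ} (hindep : iIndepFun ζ P) (hint : ∀ k, Integrable (ζ k) P)
    (hmean : ∀ k, ∫ ω, ζ k ω ∂P = m) :
    ∫ ω, (ζ 0 ω * ζ 1 ω - ζ 0 ω * ζ 3 ω + ζ 1 ω * ζ 2 ω + ζ 2 ω * ζ 3 ω) ∂P = 2 * m ^ 2 := by
  have hint_mul {k l : Fin 4} (hkl : k ≠ l) : Integrable (ζ k * ζ l) P :=
    (hindep.indepFun hkl).integrable_mul (hint k) (hint l)
  have hmean_mul {k l : Fin 4} (hkl : k ≠ l) : ∫ ω, (ζ k * ζ l) ω ∂P = m ^ 2 := by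
    rw [(hindep.indepFun hkl).integral_mul_eq_mul_integral (hint k).1 (hint l).1, hmean, hmean, sq]
  change ∫ ω, (ζ 0 * ζ 1 - ζ 0 * ζ 3 + ζ 1 * ζ 2 + ζ 2 * ζ 3) ω ∂P = _
  rw [integral_add' (((hint_mul (by decide)).sub (hint_mul (by decide))).add
      (hint_mul (by decide))) (hint_mul (by decide)),
    integral_add' ((hint_mul (by decide)).sub (hint_mul (by decide))) (hint_mul (by decide)),
    integral_sub' (hint_mul (by decide)) (hint_mul (by decide)),
    hmean_mul (by decide), hmean_mul (by decide), hmean_mul (by decide), hmean_mul (by decide)]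
  ring

/-- Area anomaly of the rotating-drift walk: for i.i.d.-type signs `ζ_1, ..., ζ_4` with
`P(ζ_k = 1) = p = 1 − P(ζ_k = −1)` and the walk `X_0 = 0` with increments
`Δx_1 = (0, ζ_1)`, `Δx_2 = (−ζ_2, 0)`, `Δx_3 = (0, −ζ_3)`, `Δx_4 = (ζ_4, 0)`, one has
`(1/4) E[A_{0,4}(X)] = ((2p − 1)²/4) · [[0,1],[−1,0]]`, which is nonzero when `p ≠ 1/2`. -/
theorem rotating_drift_area_anomaly {Ω : Type*} [MeasurableSpace Ω]
    (P : Measure Ω) [IsProbabilityMeasure P] (p : ℝ) (hp0 : 0 < p) (hp1 : p < 1)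
    (ζ : Fin 4 → Ω → ℝ) (hζmeas : ∀ k, Measurable (ζ k))
    (hindep : iIndepFun ζ P)
    (hone : ∀ k, P {ω | ζ k ω = 1} = ENNReal.ofReal p)
    (hmone : ∀ k, P {ω | ζ k ω = -1} = ENNReal.ofReal (1 - p))
    (X : ℕ → Ω → Fin 2 → ℝ)
    (hX0 : ∀ ω, X 0 ω = 0)
    (hX1 : ∀ ω, X 1 ω = X 0 ω + ![0, ζ 0 ω])
    (hX2 : ∀ ω, X 2 ω = X 1 ω + ![-(ζ 1 ω), 0])
    (hX3 : ∀ ω, X 3 ω = X 2 ω + ![0, -(ζ 2 ω)])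
    (hX4 : ∀ ω, X 4 ω = X 3 ω + ![ζ 3 ω, 0]) :
    (Matrix.of fun i j => (1 / 4 : ℝ) * ∫ ω, sarea (fun n => X n ω) 0 4 i j ∂P) =
      ((2 * p - 1) ^ 2 / 4) • !![0, 1; -1, 0] ∧
    (p ≠ 1 / 2 →
      ((2 * p - 1) ^ 2 / 4) • (!![0, 1; -1, 0] : Matrix (Fin 2) (Fin 2) ℝ) ≠ 0) := by
  have hsign k := ae_eq_one_or_eq_neg_one (hζmeas k) hp0.le hp1.le (hone k) (hmone k)
  have hint k := integrable_of_ae_eq_one_or_eq_neg_one (hζmeas k) (hsign k)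
  have hmean := integral_rotating_area_coefficient hindep hint
    fun k => integral_eq_two_mul_sub_one (hζmeas k) hp0.le (hsign k) (hone k)
  refine ⟨?_, fun hp => smul_ne_zero ?_ ?_⟩
  · ext i j
    simp only [Matrix.of_apply, fun ω => sarea_rotating_walk _ _ _ _ (fun n => X n ω) (hX0 ω)
      (hX1 ω) (hX2 ω) (hX3 ω) (hX4 ω), Matrix.smul_apply, smul_eq_mul]
    rw [integral_mul_const, integral_div, hmean]
    ring
  · exact div_ne_zero (pow_ne_zero 2 fun h => hp (by linarith)) four_ne_zero
  · exact fun h => one_ne_zero (congrFun (congrFun h 0) 1)
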